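/- Let ξ_1, ξ_2, … be i.i.d. with ℙ{ξ = 1} = p_1 > 0 and distribution (p_k) on ℕ. Fix n ≥ 2 and define R_0 = 0, R_k = R_{k-1} + ξ_k·1{R_{k-1}+ξ_k < n}, and let M_n be the number of k with R_{k-1} ≠ R_k. Then M_1 = 0 and for n ≥ 2 the distribution of M_n satisfies M_n =_d M_{n - I_n} + 1, where ℙ{I_n = k} = p_k/(p_1 + ⋯ + p_{n-1}) for 1 ≤ k ≤ n-1 and I_n is independent of M_2, …, M_{n-1}. -/

import Mathlib

/-!
Condition on the first step. If `ξ₀ = k < n`, the walk jumps to `k` and afterwards behaves like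
a fresh walk driven by `ξ₁, ξ₂, …` and truncated below `n - k`; if `ξ₀ ≥ n`, the step is
rejected and the walk starts afresh below `n`. Since `ξ₀` is independent of `(ξ₁, ξ₂, …)`, which
has the same law as `(ξ₀, ξ₁, …)`, this gives
`ℙ(M_n = j) = ∑_{k<n} p_k ℙ(M_{n-k} + 1 = j) + ℙ(ξ₀ ≥ n) ℙ(M_n = j)`.
Moving the last term to the left, where `1 - ℙ(ξ₀ ≥ n) = p_1 + ⋯ + p_{n-1} > 0`, yields the
mixture identity for `j ≥ 1`, and `ℙ(M_n = 0) = 0`.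
-/

open MeasureTheory ProbabilityTheory

/-- The walk truncated to stay below level `m`:
`R_0 = 0`, `R_{k+1} = R_k + x_k·1{R_k + x_k < m}`. -/
def truncWalk (x : ℕ → ℕ) (m : ℕ) : ℕ → ℕ
  | 0 => 0
  | k + 1 => truncWalk x m k + if truncWalk x m k + x k < m then x k else 0

noncomputable def jumps (x : ℕ → ℕ) (m : ℕ) : ℕ :=
  {l : ℕ | truncWalk x m l ≠ truncWalk x m (l + 1)}.ncard

theorem Set.ncard_setOf_eq_ncard_setOf_succ_add (P : ℕ → Prop) [DecidablePred P]
    (hP : {l | P l}.Finite) :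
    {l | P l}.ncard = {l | P (l + 1)}.ncard + if P 0 then 1 else 0 := by
  have himage : Nat.succ '' {l | P (l + 1)} = {l | P l} \ {0} := by
    ext (_ | l) <;> simp
  by_cases h0 : P 0
  · rw [if_pos h0, ← Set.ncard_image_of_injective {l | P (l + 1)} Nat.succ_injective, himage,
      Set.ncard_sdiff_singleton_add_one (s := {l | P l}) h0 hP]
  · rw [if_neg h0, ← Set.ncard_image_of_injective {l | P (l + 1)} Nat.succ_injective, himage,
      Set.sdiff_singleton_eq_self (s := {l | P l}) h0, add_zero]

lemma truncWalk_le (x : ℕ → ℕ) (m l : ℕ) : truncWalk x m l ≤ m := by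
  cases l with
  | zero => exact Nat.zero_le m
  | succ l =>
    have := truncWalk_le x m l
    rw [truncWalk]
    split <;> omega

lemma truncWalk_mono (x : ℕ → ℕ) (m : ℕ) : Monotone (truncWalk x m) :=
  monotone_nat_of_le_succ fun l => by rw [truncWalk]; omega

lemma finite_setOf_truncWalk_ne (x : ℕ → ℕ) (m : ℕ) :
    {l | truncWalk x m l ≠ truncWalk x m (l + 1)}.Finite := by
  have hlim := tendsto_atTop_ciSup (truncWalk_mono x m)
    ⟨m, by rintro _ ⟨l, rfl⟩; exact truncWalk_le x m l⟩
  rw [nhds_discrete, Filter.tendsto_pure, Filter.eventually_atTop] at hlim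
  obtain ⟨N, hN⟩ := hlim
  refine (Set.finite_Iio N).subset fun l hl => Set.mem_Iio.2 (not_le.1 fun hNl => ?_)
  exact hl ((hN l hNl).trans (hN (l + 1) (by omega)).symm)

lemma truncWalk_succ_eq_add (x : ℕ → ℕ) (m l : ℕ) :
    truncWalk x m (l + 1) =
      truncWalk x m 1 + truncWalk (fun i => x (i + 1)) (m - truncWalk x m 1) l := by
  induction l with
  | zero => rfl
  | succ l ih =>
    rw [truncWalk, ih, truncWalk.eq_2 (fun i => x (i + 1))]
    split_ifs <;> omega

lemma jumps_eq_jumps_tail (x : ℕ → ℕ) (m : ℕ) :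
    jumps x m = jumps (fun i => x (i + 1)) (m - truncWalk x m 1) +
      if truncWalk x m 1 = 0 then 0 else 1 := by
  unfold jumps
  rw [Set.ncard_setOf_eq_ncard_setOf_succ_add _ (finite_setOf_truncWalk_ne x m)]
  have htail : {l | truncWalk x m (l + 1) ≠ truncWalk x m (l + 1 + 1)} =
      {l | truncWalk (fun i => x (i + 1)) (m - truncWalk x m 1) l ≠
        truncWalk (fun i => x (i + 1)) (m - truncWalk x m 1) (l + 1)} := by
    ext l
    rw [Set.mem_ofPred_eq, truncWalk_succ_eq_add x m l, truncWalk_succ_eq_add x m (l + 1),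
      Ne, Nat.add_left_cancel_iff]
    rfl
  simp only [htail, zero_add, truncWalk.eq_1, ne_comm (a := 0), ite_not]

lemma jumps_of_lt (x : ℕ → ℕ) (m : ℕ) (hpos : 0 < x 0) (hlt : x 0 < m) :
    jumps x m = jumps (fun i => x (i + 1)) (m - x 0) + 1 := by
  simp [jumps_eq_jumps_tail x m, truncWalk, hpos.ne', hlt]

lemma jumps_of_le (x : ℕ → ℕ) (m : ℕ) (hle : m ≤ x 0) :
    jumps x m = jumps (fun i => x (i + 1)) m := by
  simp [jumps_eq_jumps_tail x m, truncWalk, hle.not_gt]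

lemma jumps_eq_zero_of_le_one (x : ℕ → ℕ) (m : ℕ) (hm : m ≤ 1) (hpos : ∀ l, 0 < x l) :
    jumps x m = 0 := by
  have hzero : ∀ l, truncWalk x m l = 0 := by
    intro l
    induction l with
    | zero => rfl
    | succ l ih => simp only [truncWalk, ih, zero_add, ite_eq_right_iff]; have := hpos l; omega
  simp [jumps, hzero]

lemma measurable_truncWalk (m l : ℕ) : Measurable fun x : ℕ → ℕ => truncWalk x m l := by
  induction l with
  | zero => exact measurable_const
  | succ l ih =>
    refine ih.add (Measurable.ite ?_ (measurable_pi_apply l) measurable_const)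
    exact measurableSet_lt (ih.add (measurable_pi_apply l)) measurable_const

lemma measurable_jumps (m : ℕ) : Measurable fun x : ℕ → ℕ => jumps x m := by
  let count : ℕ → (ℕ → ℕ) → ℕ := fun N x =>
    ((Finset.range N).filter fun l => truncWalk x m l ≠ truncWalk x m (l + 1)).card
  refine measurable_of_tendsto_metrizable (f := count) (fun N => ?_) (tendsto_pi_nhds.2 fun x => ?_)
  · simp only [count, Finset.card_filter]
    refine Finset.measurable_sum _ fun l _ => Measurable.ite ?_ measurable_const measurable_const
    exact (measurableSet_eq_fun (measurable_truncWalk m l) (measurable_truncWalk m (l + 1))).compl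
  · obtain ⟨N, hN⟩ := (finite_setOf_truncWalk_ne x m).bddAbove
    refine tendsto_atTop_of_eventually_const (i₀ := N + 1) fun M hM => ?_
    simp only [count]
    rw [jumps, ← Set.ncard_coe_finset]
    congr 1
    ext l
    simp only [Finset.coe_filter, Finset.mem_range, Set.mem_ofPred_eq, and_iff_right_iff_imp]
    exact fun hl => by have := hN hl; omega

section IndependentSequence

variable {Ω β : Type*} [MeasurableSpace Ω] [MeasurableSpace β] {μ : Measure Ω} {ξ : ℕ → Ω → β}

lemma ProbabilityTheory.iIndepFun.indepFun_head_tail (hmeas : ∀ i, Measurable (ξ i))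
    (hindep : iIndepFun ξ μ) :
    IndepFun (ξ 0) (fun ω l => ξ (l + 1) ω) μ := by
  have hsplit := indep_iSup_of_disjoint (fun i => (hmeas i).comap_le) hindep.iIndep
    (S := {0}) (T := Set.Ioi 0) (by simp)
  rw [IndepFun_iff_Indep]
  refine indep_of_indep_of_le_right (indep_of_indep_of_le_left hsplit ?_) ?_
  · exact le_biSup (fun i => MeasurableSpace.comap (ξ i) _) rfl
  · rw [MeasurableSpace.pi, MeasurableSpace.comap_iSup]
    refine iSup_le fun l => ?_
    rw [MeasurableSpace.comap_comp]
    exact le_biSup (fun i => MeasurableSpace.comap (ξ i) _) (Nat.succ_pos l)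

lemma ProbabilityTheory.iIndepFun.map_tail_eq [IsProbabilityMeasure μ]
    (hmeas : ∀ i, Measurable (ξ i)) (hindep : iIndepFun ξ μ)
    (hident : ∀ i, μ.map (ξ i) = μ.map (ξ 0)) :
    μ.map (fun ω l => ξ (l + 1) ω) = μ.map (fun ω l => ξ l ω) := by
  rw [(hindep.precomp Nat.succ_injective).map_fun_eq_infinitePi_map (fun i => hmeas _),
    hindep.map_fun_eq_infinitePi_map hmeas]
  simp only [hident]

end IndependentSequence

section FirstStep

variable {Ω : Type*} [MeasurableSpace Ω] {μ : Measure Ω} {ξ : ℕ → Ω → ℕ}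

theorem measure_jumps_eq_first_step (hmeas : ∀ i, Measurable (ξ i)) (hpos : ∀ ω, 0 < ξ 0 ω)
    (hindep : IndepFun (ξ 0) (fun ω l => ξ (l + 1) ω) μ)
    (hshift : μ.map (fun ω l => ξ (l + 1) ω) = μ.map (fun ω l => ξ l ω)) (m j : ℕ) :
    μ {ω | jumps (fun l => ξ l ω) m = j} =
      ∑ k ∈ Finset.Icc 1 (m - 1),
          μ (ξ 0 ⁻¹' {k}) * μ {ω | jumps (fun l => ξ l ω) (m - k) + 1 = j} +
        μ (ξ 0 ⁻¹' Set.Ici m) * μ {ω | jumps (fun l => ξ l ω) m = j} := by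
  have hX : Measurable fun ω l => ξ l ω := measurable_pi_lambda _ hmeas
  have hT : Measurable fun ω l => ξ (l + 1) ω := measurable_pi_lambda _ fun l => hmeas (l + 1)
  have hprod : ∀ (K : Set ℕ) (B : Set (ℕ → ℕ)), MeasurableSet B →
      μ (ξ 0 ⁻¹' K ∩ (fun ω l => ξ (l + 1) ω) ⁻¹' B) =
        μ (ξ 0 ⁻¹' K) * μ ((fun ω l => ξ l ω) ⁻¹' B) := fun K B hB => by
    rw [hindep.measure_inter_preimage_eq_mul K B .of_discrete hB, ← Measure.map_apply hT hB, hshift,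
      Measure.map_apply hX hB]
  have hdecomp : {ω | jumps (fun l => ξ l ω) m = j} =
      (⋃ k ∈ Finset.Icc 1 (m - 1),
        ξ 0 ⁻¹' {k} ∩ {ω | jumps (fun l => ξ (l + 1) ω) (m - k) + 1 = j}) ∪
      (ξ 0 ⁻¹' Set.Ici m ∩ {ω | jumps (fun l => ξ (l + 1) ω) m = j}) := by
    ext ω
    by_cases h : ξ 0 ω < m
    · simp [jumps_of_lt (fun l => ξ l ω) m (hpos ω) h, h, Nat.one_le_iff_ne_zero, (hpos ω).ne',
        Nat.le_sub_one_iff_lt (hpos ω |>.trans h)]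
    · have hk : ¬ξ 0 ω ≤ m - 1 := by have := hpos ω; omega
      simp [jumps_of_le (fun l => ξ l ω) m (not_lt.1 h), not_lt.1 h, hk]
  have hjumps : ∀ (m : ℕ) (s : Set ℕ), MeasurableSet {y : ℕ → ℕ | jumps y m ∈ s} :=
    fun m s => measurable_jumps m .of_discrete
  refine (congrArg μ hdecomp).trans ((measure_union ?disjoint ?_).trans (congrArg₂ (· + ·)
    ((measure_biUnion_finset ?pairwise fun k _ => ?_).trans (Finset.sum_congr rfl fun k _ => ?_))
    (hprod _ _ (hjumps m {j}))))
  case disjoint =>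
    rw [Set.disjoint_left]
    rintro ω hω ⟨hm, -⟩
    simp only [Set.mem_iUnion, Finset.mem_Icc, Set.mem_inter_iff, Set.mem_preimage,
      Set.mem_singleton_iff] at hω
    obtain ⟨k, ⟨-, hk⟩, rfl, -⟩ := hω
    simp only [Set.mem_preimage, Set.mem_Ici] at hm
    have := hpos ω
    omega
  case pairwise =>
    exact fun k _ l _ hkl => ((Set.disjoint_singleton.2 hkl).preimage _).mono
      Set.inter_subset_left Set.inter_subset_left
  · exact (hmeas 0 .of_discrete).inter (hT (hjumps m {j}))
  · exact (hmeas 0 .of_discrete).inter (hT (hjumps _ {a | a + 1 = j}))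
  · exact hprod _ _ (hjumps _ {a | a + 1 = j})

theorem sum_measure_mul_measure_jumps [IsProbabilityMeasure μ] (hmeas : ∀ i, Measurable (ξ i))
    (hpos : ∀ ω, 0 < ξ 0 ω) (hindep : IndepFun (ξ 0) (fun ω l => ξ (l + 1) ω) μ)
    (hshift : μ.map (fun ω l => ξ (l + 1) ω) = μ.map (fun ω l => ξ l ω)) (m j : ℕ) :
    (∑ k ∈ Finset.Icc 1 (m - 1), μ (ξ 0 ⁻¹' {k})) * μ {ω | jumps (fun l => ξ l ω) m = j} =
      ∑ k ∈ Finset.Icc 1 (m - 1),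
        μ (ξ 0 ⁻¹' {k}) * μ {ω | jumps (fun l => ξ l ω) (m - k) + 1 = j} := by
  have hcover : ∑ k ∈ Finset.Icc 1 (m - 1), μ (ξ 0 ⁻¹' {k}) + μ (ξ 0 ⁻¹' Set.Ici m) = 1 := by
    have hdisj : Disjoint (ξ 0 ⁻¹' ↑(Finset.Icc 1 (m - 1))) (ξ 0 ⁻¹' Set.Ici m) := by
      refine Disjoint.preimage _ (Set.disjoint_left.2 fun k hk hk' => ?_)
      simp only [Finset.coe_Icc, Set.mem_Icc, Set.mem_Ici] at hk hk'
      omega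
    rw [sum_measure_preimage_singleton _ fun _ _ => hmeas 0 .of_discrete,
      ← measure_union hdisj (hmeas 0 .of_discrete), ← measure_univ (μ := μ)]
    congr 1
    ext ω
    have := hpos ω
    simp only [Finset.coe_Icc, Set.mem_union, Set.mem_preimage, Set.mem_Icc, Set.mem_Ici,
      Set.mem_univ, iff_true]
    omega
  refine (ENNReal.add_left_inj (ENNReal.mul_ne_top (measure_ne_top μ (ξ 0 ⁻¹' Set.Ici m))
    (measure_ne_top μ {ω | jumps (fun l => ξ l ω) m = j}))).1 ?_
  rw [← add_mul, hcover, one_mul]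
  exact measure_jumps_eq_first_step hmeas hpos hindep hshift m j

end FirstStep

/-- For i.i.d. `ξ_i` with distribution `(p_k)` on ℕ, `p_1 > 0`, the jump count
`M_n` of the truncated walk satisfies `M_1 = 0` and, for `n ≥ 2`, the
distributional recursion `M_n =_d M_{n-I_n} + 1`, where
`ℙ{I_n = k} = p_k/(p_1 + ⋯ + p_{n-1})` and `I_n` is independent of the `M_j`
(formulated as a mixture identity for the law of `M_n`). -/
theorem jumps_recursion {Ω : Type*} [MeasurableSpace Ω] (μ : Measure Ω)
    [IsProbabilityMeasure μ] (ξ : ℕ → Ω → ℕ)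
    (hmeas : ∀ i, Measurable (ξ i)) (hpos : ∀ i ω, 1 ≤ ξ i ω)
    (hindep : iIndepFun ξ μ)
    (hident : ∀ i, Measure.map (ξ i) μ = Measure.map (ξ 0) μ)
    (p : ℕ → ℝ) (hp : ∀ k, p k = (μ {ω | ξ 0 ω = k}).toReal) (hp1 : 0 < p 1)
    (n : ℕ) (hn : 2 ≤ n) :
    (∀ ω, jumps (fun k => ξ k ω) 1 = 0) ∧
    μ {ω | jumps (fun k => ξ k ω) n = 0} = 0 ∧
    (∀ j : ℕ, μ {ω | jumps (fun k => ξ k ω) n = j + 1}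
        = ∑ k ∈ Finset.Icc 1 (n - 1),
            ENNReal.ofReal (p k / ∑ i ∈ Finset.Icc 1 (n - 1), p i) *
              μ {ω | jumps (fun l => ξ l ω) (n - k) = j}) := by
  have key := sum_measure_mul_measure_jumps hmeas (hpos 0) (hindep.indepFun_head_tail hmeas)
    (hindep.map_tail_eq hmeas hident) n
  set q := ∑ k ∈ Finset.Icc 1 (n - 1), μ (ξ 0 ⁻¹' {k})
  have hq0 : q ≠ 0 := fun hq => (ENNReal.toReal_pos_iff.1 (hp 1 ▸ hp1)).1.ne'
    (Finset.sum_eq_zero_iff.1 hq 1 (Finset.mem_Icc.2 ⟨le_rfl, by omega⟩))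
  have hq : q ≠ ⊤ := ENNReal.sum_ne_top.2 fun k _ => measure_ne_top μ _
  refine ⟨fun ω => jumps_eq_zero_of_le_one _ 1 le_rfl fun l => hpos l ω, ?_, fun j => ?_⟩
  · simpa [hq0] using key 0
  · have hcoef : ∀ k,
        ENNReal.ofReal (p k / ∑ i ∈ Finset.Icc 1 (n - 1), p i) = μ (ξ 0 ⁻¹' {k}) / q := by
      intro k
      rw [Finset.sum_congr rfl fun i _ => hp i, ← ENNReal.toReal_sum fun i _ => measure_ne_top μ _,
        hp k, ← ENNReal.toReal_div]
      exact ENNReal.ofReal_toReal (ENNReal.div_lt_top (measure_ne_top μ _) hq0).ne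
    have hsolved : μ {ω | jumps (fun k => ξ k ω) n = j + 1} =
        (∑ k ∈ Finset.Icc 1 (n - 1),
          μ (ξ 0 ⁻¹' {k}) * μ {ω | jumps (fun l => ξ l ω) (n - k) = j}) / q :=
      (ENNReal.eq_div_iff hq0 hq).2 (by simpa using key (j + 1))
    rw [hsolved, ENNReal.div_eq_inv_mul, Finset.mul_sum]
    refine Finset.sum_congr rfl fun k _ => ?_
    rw [hcoef, ENNReal.div_eq_inv_mul, mul_assoc]
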